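/- Let 1 ≤ p < ∞ and let M, N be infinite sets of positive integers with ΓL₁(M, N) < ∞. Then for every k and all scalars α₁,…,α_k, ‖Σ_{j=1}^k αⱼ e_{nⱼ}‖_{S_p} ≤ ΓL₁(M,N)^{1/p} · ‖Σ_{j=1}^k αⱼ e_{mⱼ}‖_{S_p}, where M = {m₁ < m₂ < ⋯} and N = {n₁ < n₂ < ⋯} are the increasing enumerations. -/

import Mathlib

open Finset Filter

/-- A Schreier set: a finite set of naturals whose cardinality is at most its minimum
(elements are automatically positive when nonempty). -/
def IsSchreier (F : Finset ℕ) : Prop := ∀ h : F.Nonempty, F.card ≤ F.min' h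

/-- A maximal Schreier set: nonempty with cardinality equal to its minimum. -/
def IsMaxSchreier (F : Finset ℕ) : Prop := ∃ h : F.Nonempty, F.card = F.min' h

/-- A (possibly empty) list of nonempty successive Schreier sets. -/
def SchreierChainList (C : List (Finset ℕ)) : Prop :=
  (∀ F ∈ C, IsSchreier F ∧ F.Nonempty) ∧
  C.Chain' (fun F G => ∀ a ∈ F, ∀ b ∈ G, a < b)

/-- A Schreier chain: a nonempty finite list of nonempty successive Schreier sets. -/
def IsSchreierChain (C : List (Finset ℕ)) : Prop := C ≠ [] ∧ SchreierChainList C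

def chainUnion (C : List (Finset ℕ)) : Finset ℕ := C.foldr (· ∪ ·) ∅

noncomputable def mu (p : ℝ) (x : ℕ → ℝ) (F : Finset ℕ) : ℝ :=
  (∑ n ∈ F, |x n| ^ p) ^ (1 / p)

/-- The p-th Schreier norm of a (finitely supported) sequence. -/
noncomputable def schreierNorm (p : ℝ) (x : ℕ → ℝ) : ℝ :=
  sSup {r | ∃ F : Finset ℕ, IsSchreier F ∧ F.Nonempty ∧ r = mu p x F}

noncomputable def betaNorm (p : ℝ) (x : ℕ → ℝ) (C : List (Finset ℕ)) : ℝ :=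
  ((C.map fun F => (∑ n ∈ F, |x n|) ^ p).sum) ^ (1 / p)

/-- The p-th Baernstein norm of a (finitely supported) sequence. -/
noncomputable def baernsteinNorm (p : ℝ) (x : ℕ → ℝ) : ℝ :=
  sSup {r | ∃ C : List (Finset ℕ), IsSchreierChain C ∧ r = betaNorm p x C}

/-- The Schreier covering number of a finite set. -/
noncomputable def tau1 (A : Finset ℕ) : ℕ :=
  sInf {m | ∃ C : List (Finset ℕ), SchreierChainList C ∧ C.length = m ∧ A ⊆ chainUnion C}

/-- Increasing enumeration of a set of naturals (0-indexed). -/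
noncomputable def enumSet (M : Set ℕ) : ℕ → ℕ := Nat.nth (· ∈ M)

/-- `M(J)`: the image of an index set `J` under the increasing enumeration of `M`. -/
noncomputable def subImage (M : Set ℕ) (J : Finset ℕ) : Finset ℕ := J.image (enumSet M)

/-- The Gasparis–Leung index `ΓL₁(M, N) ∈ ℕ ∪ {∞}`. -/
noncomputable def GLindex (M N : Set ℕ) : ℕ∞ :=
  ⨆ J ∈ {J : Finset ℕ | IsSchreier (subImage N J)}, (tau1 (subImage M J) : ℕ∞)

/-
Fix a Schreier set `F` and let `J` be the indices `j < k` with `nⱼ ∈ F`. Then `N(J) ⊆ F` is a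
Schreier set, so `M(J)` is covered by a chain of at most `C = ΓL₁(M, N)` Schreier sets. Each of
them carries at most `‖x_M‖^p` of the `p`-th power mass of `x_M = Σ αⱼ e_{mⱼ}`, hence
`μ_p(x_N, F)^p = Σ_{j ∈ J} |αⱼ|^p ≤ C ‖x_M‖^p`.
-/

lemma IsSchreier.subset {F G : Finset ℕ} (hG : IsSchreier G) (h : F ⊆ G) : IsSchreier F :=
  fun hF => calc
    #F ≤ #G := card_le_card h
    _ ≤ G.min' (hF.mono h) := hG _
    _ ≤ F.min' hF := min'_subset _ h

lemma mem_chainUnion {L : List (Finset ℕ)} {n : ℕ} : n ∈ chainUnion L ↔ ∃ G ∈ L, n ∈ G := by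
  induction L with
  | nil => simp [chainUnion]
  | cons G L ih => simp_all [chainUnion]

lemma chainUnion_cons (G : Finset ℕ) (L : List (Finset ℕ)) :
    chainUnion (G :: L) = G ∪ chainUnion L := rfl

lemma sum_chainUnion_le {f : ℕ → ℝ} (hf : ∀ n, 0 ≤ f n) (L : List (Finset ℕ)) :
    ∑ n ∈ chainUnion L, f n ≤ (L.map fun G => ∑ n ∈ G, f n).sum := by
  induction L with
  | nil => simp [chainUnion]
  | cons G L ih =>
    rw [chainUnion_cons, List.map_cons, List.sum_cons]
    have hinter := sum_union_inter (s₁ := G) (s₂ := chainUnion L) (f := f)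
    have : 0 ≤ ∑ n ∈ G ∩ chainUnion L, f n := sum_nonneg fun n _ => hf n
    linarith

/-- Witness: the singletons `{a}`, `a ∈ A`, in increasing order. -/
lemma exists_schreierChainList_cover {A : Finset ℕ} (hA : ∀ a ∈ A, 0 < a) :
    ∃ L, SchreierChainList L ∧ A ⊆ chainUnion L := by
  refine ⟨(A.sort (· ≤ ·)).map ({·}), ⟨?_, ?_⟩, fun a ha => ?_⟩
  · simp only [List.mem_map, mem_sort]
    rintro _ ⟨a, ha, rfl⟩
    exact ⟨fun _ => by simpa using Nat.one_le_of_lt (hA a ha), singleton_nonempty a⟩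
  · refine List.isChain_map_of_isChain _ ?_ A.sortedLT_sort.isChain
    simp +contextual
  · exact mem_chainUnion.2 ⟨{a}, List.mem_map_of_mem ((mem_sort _).2 ha), mem_singleton_self a⟩

lemma exists_schreierChainList_length_tau1 {A : Finset ℕ} (hA : ∀ a ∈ A, 0 < a) :
    ∃ L, SchreierChainList L ∧ L.length = tau1 A ∧ A ⊆ chainUnion L :=
  have ⟨L, hL, hcov⟩ := exists_schreierChainList_cover hA
  Nat.sInf_mem (s := {m | ∃ L, SchreierChainList L ∧ L.length = m ∧ A ⊆ chainUnion L})
    ⟨L.length, L, hL, rfl, hcov⟩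

lemma tau1_le_GLindex {M N : Set ℕ} {J : Finset ℕ} (hJ : IsSchreier (subImage N J)) :
    (tau1 (subImage M J) : ℕ∞) ≤ GLindex M N :=
  le_iSup₂ (f := fun J (_ : J ∈ {J | IsSchreier (subImage N J)}) => (tau1 (subImage M J) : ℕ∞))
    J hJ

section SchreierNorm

variable {p : ℝ} {x : ℕ → ℝ}

lemma schreierNorm_nonneg : 0 ≤ schreierNorm p x :=
  Real.sSup_nonneg fun _ ⟨_, _, _, hr⟩ => hr ▸ Real.rpow_nonneg (sum_nonneg fun _ _ =>
    Real.rpow_nonneg (abs_nonneg _) _) _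

lemma sum_rpow_le_schreierNorm_rpow (hp : 0 < p)
    (hx : BddAbove {r | ∃ F : Finset ℕ, IsSchreier F ∧ F.Nonempty ∧ r = mu p x F})
    {G : Finset ℕ} (hG : IsSchreier G) : ∑ n ∈ G, |x n| ^ p ≤ schreierNorm p x ^ p := by
  obtain rfl | hne := G.eq_empty_or_nonempty
  · simpa using Real.rpow_nonneg schreierNorm_nonneg p
  rw [← Real.rpow_inv_le_iff_of_pos (sum_nonneg fun _ _ => Real.rpow_nonneg (abs_nonneg _) _)
    schreierNorm_nonneg hp, ← one_div]
  exact le_csSup hx ⟨G, hG, hne, rfl⟩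

lemma sum_rpow_le_length_mul_schreierNorm_rpow (hp : 0 < p)
    (hx : BddAbove {r | ∃ F : Finset ℕ, IsSchreier F ∧ F.Nonempty ∧ r = mu p x F})
    {L : List (Finset ℕ)} (hL : SchreierChainList L) {A : Finset ℕ} (hA : A ⊆ chainUnion L) :
    ∑ n ∈ A, |x n| ^ p ≤ L.length * schreierNorm p x ^ p := calc
  ∑ n ∈ A, |x n| ^ p ≤ ∑ n ∈ chainUnion L, |x n| ^ p :=
    sum_le_sum_of_subset_of_nonneg hA fun _ _ _ => Real.rpow_nonneg (abs_nonneg _) _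
  _ ≤ (L.map fun G => ∑ n ∈ G, |x n| ^ p).sum :=
    sum_chainUnion_le (fun _ => Real.rpow_nonneg (abs_nonneg _) _) L
  _ ≤ (L.map fun G => ∑ n ∈ G, |x n| ^ p).length • schreierNorm p x ^ p :=
    List.sum_le_card_nsmul _ _ <| List.forall_mem_map.2 fun G hG =>
      sum_rpow_le_schreierNorm_rpow hp hx (hL.1 G hG).1
  _ = L.length * schreierNorm p x ^ p := by rw [List.length_map, nsmul_eq_mul]

lemma mu_le_of_sum_rpow_le (hp : 0 < p) {F : Finset ℕ} {c s : ℝ} (hc : 0 ≤ c) (hs : 0 ≤ s)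
    (h : ∑ n ∈ F, |x n| ^ p ≤ c * s ^ p) : mu p x F ≤ c ^ (1 / p) * s := by
  rw [mu, one_div, Real.rpow_inv_le_iff_of_pos
    (sum_nonneg fun _ _ => Real.rpow_nonneg (abs_nonneg _) _) (by positivity) hp,
    Real.mul_rpow (by positivity) hs, Real.rpow_inv_rpow hc hp.ne']
  exact h

end SchreierNorm

/-- The finitely supported sequence `Σᵢ αᵢ e_{g i}`. -/
def embedSeq {ι : Type*} [Fintype ι] (g : ι → ℕ) (α : ι → ℝ) (n : ℕ) : ℝ :=
  ∑ i, if g i = n then α i else 0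

section EmbedSeq

variable {ι : Type*} [Fintype ι] {g : ι → ℕ} {α : ι → ℝ}

lemma embedSeq_apply_of_injective (hg : g.Injective) (i : ι) : embedSeq g α (g i) = α i :=
  (sum_eq_single i (fun _ _ hj => if_neg (hg.ne hj)) (by simp)).trans (if_pos rfl)

lemma embedSeq_eq_zero {n : ℕ} (hn : ∀ i, g i ≠ n) : embedSeq g α n = 0 :=
  sum_eq_zero fun i _ => if_neg (hn i)

lemma sum_embedSeq_image (hg : g.Injective) (f : ℝ → ℝ) (J : Finset ι) :
    ∑ n ∈ J.image g, f (embedSeq g α n) = ∑ i ∈ J, f (α i) := by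
  rw [sum_image hg.injOn]
  simp only [embedSeq_apply_of_injective hg]

lemma sum_embedSeq_eq_sum_filter [DecidableEq ι] (hg : g.Injective) {f : ℝ → ℝ} (hf : f 0 = 0)
    (F : Finset ℕ) : ∑ n ∈ F, f (embedSeq g α n) = ∑ i ∈ {i | g i ∈ F}, f (α i) := by
  rw [← sum_embedSeq_image hg]
  refine (sum_subset (by simp [subset_iff]) fun n _ hn => ?_).symm
  rw [embedSeq_eq_zero fun i hi => hn (mem_image.2 ⟨i, by simp_all⟩), hf]

lemma bddAbove_mu_embedSeq {p : ℝ} (hp : 0 < p) (hg : g.Injective) :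
    BddAbove {r | ∃ F : Finset ℕ, IsSchreier F ∧ F.Nonempty ∧ r = mu p (embedSeq g α) F} := by
  classical
  refine ⟨(∑ i, |α i| ^ p) ^ (1 / p), ?_⟩
  rintro _ ⟨F, -, -, rfl⟩
  have hf : |(0 : ℝ)| ^ p = 0 := by simp [hp.ne']
  rw [mu, sum_embedSeq_eq_sum_filter hg (f := (|·| ^ p)) hf]
  gcongr
  exact subset_univ _

end EmbedSeq

theorem schreier_domination_of_GLindex_general (p : ℝ) (hp : 1 ≤ p) (M N : Set ℕ)
    (hM : M.Infinite) (hN : N.Infinite)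
    (hMpos : ∀ m ∈ M, 0 < m)
    (C : ℕ) (hGL : GLindex M N = (C : ℕ∞)) (k : ℕ) (α : Fin k → ℝ) :
    schreierNorm p (fun n => ∑ j : Fin k, if enumSet N (j : ℕ) = n then α j else 0) ≤
      (C : ℝ) ^ (1 / p) *
        schreierNorm p (fun n => ∑ j : Fin k, if enumSet M (j : ℕ) = n then α j else 0) := by
  have hp0 : 0 < p := by linarith
  have hf : |(0 : ℝ)| ^ p = 0 := by simp [hp0.ne']
  set gM : Fin k → ℕ := fun j => enumSet M j
  set gN : Fin k → ℕ := fun j => enumSet N j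
  have hgM : gM.Injective := (Nat.nth_injective hM).comp Fin.val_injective
  have hgN : gN.Injective := (Nat.nth_injective hN).comp Fin.val_injective
  change schreierNorm p (embedSeq gN α) ≤ C ^ (1 / p) * schreierNorm p (embedSeq gM α)
  refine Real.sSup_le ?_ (by positivity [schreierNorm_nonneg (p := p) (x := embedSeq gM α)])
  rintro _ ⟨F, hF, -, rfl⟩
  set J : Finset (Fin k) := {j | gN j ∈ F}
  have hNJ : IsSchreier (subImage N (J.image Fin.val)) :=
    hF.subset (by simp [subImage, image_image, subset_iff, J, gN])
  have hMJ : subImage M (J.image Fin.val) = J.image gM := by rw [subImage, image_image]; rfl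
  obtain ⟨L, hL, hlen, hcov⟩ := exists_schreierChainList_length_tau1 (A := J.image gM)
    (forall_mem_image.2 fun j _ => hMpos _ (Nat.nth_mem_of_infinite hM j))
  have hLC : L.length ≤ C := by
    have := tau1_le_GLindex (M := M) hNJ
    rwa [hMJ, hGL, Nat.cast_le, ← hlen] at this
  refine mu_le_of_sum_rpow_le hp0 C.cast_nonneg schreierNorm_nonneg ?_
  calc ∑ n ∈ F, |embedSeq gN α n| ^ p = ∑ j ∈ J, |α j| ^ p :=
        sum_embedSeq_eq_sum_filter hgN (f := (|·| ^ p)) hf F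
    _ = ∑ n ∈ J.image gM, |embedSeq gM α n| ^ p := (sum_embedSeq_image hgM (|·| ^ p) J).symm
    _ ≤ L.length * schreierNorm p (embedSeq gM α) ^ p :=
        sum_rpow_le_length_mul_schreierNorm_rpow hp0 (bddAbove_mu_embedSeq hp0 hgM) hL hcov
    _ ≤ C * schreierNorm p (embedSeq gM α) ^ p := by
        gcongr
        exact Real.rpow_nonneg schreierNorm_nonneg _

/-- If ΓL₁(M, N) = C < ∞, then (e_m)_{m∈M} C^(1/p)-dominates (e_n)_{n∈N} in the
Schreier norm. -/
theorem schreier_domination_of_GLindex (p : ℝ) (hp : 1 ≤ p) (M N : Set ℕ)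
    (hM : M.Infinite) (hN : N.Infinite)
    (hMpos : ∀ m ∈ M, 0 < m) (hNpos : ∀ n ∈ N, 0 < n)
    (C : ℕ) (hGL : GLindex M N = (C : ℕ∞)) (k : ℕ) (α : Fin k → ℝ) :
    schreierNorm p (fun n => ∑ j : Fin k, if enumSet N (j : ℕ) = n then α j else 0) ≤
      (C : ℝ) ^ (1 / p) *
        schreierNorm p (fun n => ∑ j : Fin k, if enumSet M (j : ℕ) = n then α j else 0) :=
  schreier_domination_of_GLindex_general p hp M N hM hN hMpos C hGL k α
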